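/- arXiv:1810.03003 — 3 statements merged into one kernel-verified Lean document; each statement's English description precedes it below -/
import Mathlib

section
/- Let σ be a 2×2 real matrix (possibly non-symmetric) with 1 + Tr σ + det σ ≠ 0, and let u, v : Ω → ℝ be differentiable at a point z ∈ Ω ⊂ ℝ² ≅ ℂ. Set f = u + iv, let f_z = (∂_{x₁}f − i∂_{x₂}f)/2 and f_{z̄} = (∂_{x₁}f + i∂_{x₂}f)/2 be the Wirtinger derivatives, and define μ = (σ₂₂ − σ₁₁ − i(σ₁₂+σ₂₁))/(1 + Tr σ + det σ) and ν = (1 − det σ + i(σ₁₂ − σ₂₁))/(1 + Tr σ + det σ). Then the first-order system ∇v = Jσ∇u at z is equivalent to the Beltrami-type equation f_{z̄} = μ f_z + ν conj(f_z) at z, where J = ((0,−1),(1,0)). -/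
open Complex
open scoped Topology

noncomputable section

/-!
With `a = ∂₁u`, `b = ∂₂u`, `c = ∂₁v`, `d = ∂₂v` one has `2 f_z = (a + d) + i (c - b)` and
`2 f_{z̄} = (a - d) + i (c + b)`. Multiplied by `D = 1 + Tr σ + det σ = det (1 + σ)`, the defect of
the Beltrami equation becomes `α p + β q`, where `p = c + (σ∇u)₂` and `q = d - (σ∇u)₁` are the
defects of the gradient system and `α = -σ₁₂ + i (1 + σ₁₁)`, `β = -(1 + σ₂₂) + i σ₂₁`.
Since `Im (conj α * β) = D ≠ 0`, the numbers `α`, `β` are `ℝ`-linearly independent, so the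
defect vanishes exactly when `p = q = 0`.
-/

/-- Wirtinger derivative `f_z = (∂_{x₁}f − i ∂_{x₂}f)/2` of `f : ℂ → ℂ`
(the plane `ℝ²` being identified with `ℂ`, `z = x₁ + i x₂`). -/
def wirtingerZ (f : ℂ → ℂ) (z : ℂ) : ℂ :=
  (fderiv ℝ f z 1 - Complex.I * fderiv ℝ f z Complex.I) / 2

/-- Wirtinger derivative `f_{z̄} = (∂_{x₁}f + i ∂_{x₂}f)/2` of `f : ℂ → ℂ`. -/
def wirtingerZbar (f : ℂ → ℂ) (z : ℂ) : ℂ :=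
  (fderiv ℝ f z 1 + Complex.I * fderiv ℝ f z Complex.I) / 2

open ComplexConjugate

theorem mul_ofReal_add_mul_ofReal_eq_zero_iff {α β : ℂ} (h : (conj α * β).im ≠ 0) (p q : ℝ) :
    α * p + β * q = 0 ↔ p = 0 ∧ q = 0 := by
  refine ⟨fun hpq => ?_, fun ⟨hp, hq⟩ => by simp [hp, hq]⟩
  have hre : α.re * p + β.re * q = 0 := by simpa using congrArg re hpq
  have him : α.im * p + β.im * q = 0 := by simpa using congrArg im hpq
  rw [mul_im, conj_re, conj_im] at h
  constructor
  · refine (mul_eq_zero.mp ?_).resolve_left h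
    linear_combination β.im * hre - β.re * him
  · refine (mul_eq_zero.mp ?_).resolve_left h
    linear_combination α.re * him - α.im * hre

section

variable {E : Type*} [NormedAddCommGroup E] [NormedSpace ℝ E] {u v : E → ℝ} {z : E}

theorem fderiv_ofReal_add_ofReal_mul_I_apply (hu : DifferentiableAt ℝ u z)
    (hv : DifferentiableAt ℝ v z) (h : E) :
    fderiv ℝ (fun w => (u w : ℂ) + v w * I) z h = fderiv ℝ u z h + fderiv ℝ v z h * I := by
  have hf : HasFDerivAt (fun w => (u w : ℂ) + v w * I)
      (ofRealCLM.comp (fderiv ℝ u z) + (fderiv ℝ v z).smulRight I) z :=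
    (ofRealCLM.hasFDerivAt.comp z hu.hasFDerivAt).add
      (by simpa [real_smul] using hv.hasFDerivAt.smul_const I)
  simp [hf.fderiv, real_smul]

end

section

variable {u v : ℂ → ℝ} {z : ℂ}

theorem wirtingerZ_ofReal_add_ofReal_mul_I (hu : DifferentiableAt ℝ u z)
    (hv : DifferentiableAt ℝ v z) :
    wirtingerZ (fun w => (u w : ℂ) + v w * I) z =
      ⟨(fderiv ℝ u z 1 + fderiv ℝ v z I) / 2, (fderiv ℝ v z 1 - fderiv ℝ u z I) / 2⟩ := by
  apply Complex.ext <;> simp [wirtingerZ, fderiv_ofReal_add_ofReal_mul_I_apply hu hv]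

theorem wirtingerZbar_ofReal_add_ofReal_mul_I (hu : DifferentiableAt ℝ u z)
    (hv : DifferentiableAt ℝ v z) :
    wirtingerZbar (fun w => (u w : ℂ) + v w * I) z =
      ⟨(fderiv ℝ u z 1 - fderiv ℝ v z I) / 2, (fderiv ℝ v z 1 + fderiv ℝ u z I) / 2⟩ := by
  apply Complex.ext <;> simp [wirtingerZbar, fderiv_ofReal_add_ofReal_mul_I_apply hu hv]
  ring

end

def beltramiMu (σ : Matrix (Fin 2) (Fin 2) ℝ) : ℂ :=
  (((σ 1 1 - σ 0 0 : ℝ) : ℂ) - ((σ 0 1 + σ 1 0 : ℝ) : ℂ) * I) / ((1 + σ.trace + σ.det : ℝ) : ℂ)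

def beltramiNu (σ : Matrix (Fin 2) (Fin 2) ℝ) : ℂ :=
  (((1 - σ.det : ℝ) : ℂ) + ((σ 0 1 - σ 1 0 : ℝ) : ℂ) * I) / ((1 + σ.trace + σ.det : ℝ) : ℂ)

theorem gradient_system_iff_beltrami_of_partials (σ : Matrix (Fin 2) (Fin 2) ℝ)
    (hσ : 1 + σ.trace + σ.det ≠ 0) (a b c d : ℝ) :
    (c = -(σ 1 0 * a + σ 1 1 * b) ∧ d = σ 0 0 * a + σ 0 1 * b) ↔
      (⟨(a - d) / 2, (c + b) / 2⟩ : ℂ) =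
        beltramiMu σ * ⟨(a + d) / 2, (c - b) / 2⟩ + beltramiNu σ * conj ⟨(a + d) / 2, (c - b) / 2⟩ := by
  have hD : ((1 + σ.trace + σ.det : ℝ) : ℂ) ≠ 0 := ofReal_ne_zero.mpr hσ
  have hdefect : ((1 + σ.trace + σ.det : ℝ) : ℂ) * ((⟨(a - d) / 2, (c + b) / 2⟩ : ℂ) -
      (beltramiMu σ * ⟨(a + d) / 2, (c - b) / 2⟩ + beltramiNu σ * conj ⟨(a + d) / 2, (c - b) / 2⟩)) =
      ⟨-σ 0 1, 1 + σ 0 0⟩ * (c + (σ 1 0 * a + σ 1 1 * b) : ℝ) +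
        ⟨-(1 + σ 1 1), σ 1 0⟩ * (d - (σ 0 0 * a + σ 0 1 * b) : ℝ) := by
    simp only [beltramiMu, beltramiNu]
    field_simp
    apply Complex.ext <;> simp [Matrix.trace_fin_two, Matrix.det_fin_two] <;> ring
  have hdet : (conj (⟨-σ 0 1, 1 + σ 0 0⟩ : ℂ) * ⟨-(1 + σ 1 1), σ 1 0⟩).im = 1 + σ.trace + σ.det := by
    simp [Matrix.trace_fin_two, Matrix.det_fin_two]; ring
  calc (c = -(σ 1 0 * a + σ 1 1 * b) ∧ d = σ 0 0 * a + σ 0 1 * b)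
      ↔ (c + (σ 1 0 * a + σ 1 1 * b) = 0 ∧ d - (σ 0 0 * a + σ 0 1 * b) = 0) := by
        rw [add_eq_zero_iff_eq_neg, sub_eq_zero]
    _ ↔ _ := (mul_ofReal_add_mul_ofReal_eq_zero_iff (hdet ▸ hσ) _ _).symm
    _ ↔ _ := by rw [← hdefect, mul_eq_zero, or_iff_right hD, sub_eq_zero]

/-- Let `σ` be a `2×2` real matrix (possibly non-symmetric) with `1 + Tr σ + det σ ≠ 0`,
and let `u, v` be differentiable at a point `z`.  Set `f = u + iv`, and let
`μ = (σ₂₂ − σ₁₁ − i(σ₁₂+σ₂₁))/(1 + Tr σ + det σ)`,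
`ν = (1 − det σ + i(σ₁₂ − σ₂₁))/(1 + Tr σ + det σ)`.
Then the first-order system `∇v = Jσ∇u` at `z` (i.e. `v_{x₁} = −(σ∇u)₂`, `v_{x₂} = (σ∇u)₁`,
where `J = ((0,−1),(1,0))`) is equivalent to the Beltrami-type equation
`f_{z̄} = μ f_z + ν conj(f_z)` at `z`. -/
theorem gradient_system_iff_beltrami
    (σ : Matrix (Fin 2) (Fin 2) ℝ) (hσ : 1 + σ.trace + σ.det ≠ 0)
    (u v : ℂ → ℝ) (z : ℂ)
    (hu : DifferentiableAt ℝ u z) (hv : DifferentiableAt ℝ v z) :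
    (fderiv ℝ v z 1 =
        -(σ 1 0 * fderiv ℝ u z 1 + σ 1 1 * fderiv ℝ u z Complex.I) ∧
     fderiv ℝ v z Complex.I =
        σ 0 0 * fderiv ℝ u z 1 + σ 0 1 * fderiv ℝ u z Complex.I)
    ↔
    (wirtingerZbar (fun w => (u w : ℂ) + v w * Complex.I) z =
      ((((σ 1 1 - σ 0 0 : ℝ) : ℂ) - ((σ 0 1 + σ 1 0 : ℝ) : ℂ) * Complex.I) /
          ((1 + σ.trace + σ.det : ℝ) : ℂ)) *
        wirtingerZ (fun w => (u w : ℂ) + v w * Complex.I) z +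
      ((((1 - σ.det : ℝ) : ℂ) + ((σ 0 1 - σ 1 0 : ℝ) : ℂ) * Complex.I) /
          ((1 + σ.trace + σ.det : ℝ) : ℂ)) *
        (starRingEnd ℂ) (wirtingerZ (fun w => (u w : ℂ) + v w * Complex.I) z)) := by
  rw [wirtingerZbar_ofReal_add_ofReal_mul_I hu hv, wirtingerZ_ofReal_add_ofReal_mul_I hu hv]
  exact gradient_system_iff_beltrami_of_partials σ hσ _ _ _ _
end
end

section
/- Let K ≥ 1 and let σ be a 2×2 real matrix (possibly non-symmetric) satisfying σξ·ξ ≥ K⁻¹|ξ|² and σ⁻¹ξ·ξ ≥ K⁻¹|ξ|² for all ξ ∈ ℝ². Define the complex dilatations μ = (σ₂₂ − σ₁₁ − i(σ₁₂+σ₂₁))/(1 + Tr σ + det σ) and ν = (1 − det σ + i(σ₁₂ − σ₂₁))/(1 + Tr σ + det σ). Then there exists a constant k < 1, depending only on K, such that |μ| + |ν| ≤ k. -/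
open Complex

/-!
Write `σ = !![a, b; c, d]` and `τ = K⁻¹`. Ellipticity of `σ` says that the quadratic form of
`σ - τ I` is nonnegative, so `(b + c)² ≤ 4 (a - τ) (d - τ)`. This bounds the numerators:
`|μ| (1 + Tr σ + det σ) ≤ Tr σ - 2τ`, since `(d - a)² + (b + c)² ≤ (a + d - 2τ)²`, and
`|ν| (1 + Tr σ + det σ) ≤ 1 + det σ`, since `(b - c)² ≤ 4 det σ`. Hence
`|μ| + |ν| ≤ 1 - 2τ / (1 + Tr σ + det σ)`. The same discriminant bound gives
`τ Tr A - τ² ≤ det A` and `τ² ≤ det A` for every elliptic `A`; applied to `A = σ⁻¹`, whose trace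
and determinant are `Tr σ / det σ` and `1 / det σ`, it yields `Tr σ ≤ 2K` and `det σ ≤ K²`, so the
denominator is at most `(K + 1)²`.
-/

def IsElliptic (τ : ℝ) (A : Matrix (Fin 2) (Fin 2) ℝ) : Prop :=
  ∀ ξ : Fin 2 → ℝ, τ * (ξ 0 ^ 2 + ξ 1 ^ 2) ≤ ∑ i, A.mulVec ξ i * ξ i

namespace IsElliptic

variable {τ : ℝ} {A : Matrix (Fin 2) (Fin 2) ℝ}

theorem apply (h : IsElliptic τ A) (x y : ℝ) :
    τ * (x ^ 2 + y ^ 2) ≤ A 0 0 * x ^ 2 + (A 0 1 + A 1 0) * x * y + A 1 1 * y ^ 2 := by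
  have hξ := h ![x, y]
  simp only [Matrix.mulVec, dotProduct, Fin.sum_univ_two, Matrix.cons_val_zero,
    Matrix.cons_val_one] at hξ
  linarith

theorem le_apply_zero_zero (h : IsElliptic τ A) : τ ≤ A 0 0 := by
  simpa using h.apply 1 0

theorem le_apply_one_one (h : IsElliptic τ A) : τ ≤ A 1 1 := by
  simpa using h.apply 0 1

theorem sq_add_le (h : IsElliptic τ A) :
    (A 0 1 + A 1 0) ^ 2 ≤ 4 * (A 0 0 - τ) * (A 1 1 - τ) := by
  have hdiscrim : discrim (A 0 0 - τ) (A 0 1 + A 1 0) (A 1 1 - τ) ≤ 0 :=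
    discrim_le_zero fun x => by nlinarith [h.apply x 1]
  rw [discrim] at hdiscrim
  linarith

theorem le_det (h : IsElliptic τ A) :
    τ * A.trace - τ ^ 2 + (A 0 1 - A 1 0) ^ 2 / 4 ≤ A.det := by
  rw [Matrix.trace_fin_two, Matrix.det_fin_two]
  nlinarith [h.sq_add_le]

theorem sq_le_det (h : IsElliptic τ A) (hτ : 0 ≤ τ) : τ ^ 2 ≤ A.det := by
  have hdet := h.le_det
  rw [Matrix.trace_fin_two] at hdet
  nlinarith [h.le_apply_zero_zero, h.le_apply_one_one, sq_nonneg (A 0 1 - A 1 0)]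

end IsElliptic

theorem Matrix.trace_inv_fin_two {𝕜 : Type*} [Field 𝕜] (A : Matrix (Fin 2) (Fin 2) 𝕜) :
    A⁻¹.trace = A.trace / A.det := by
  rw [Matrix.inv_def, Ring.inverse_eq_inv', Matrix.trace_smul, Matrix.adjugate_fin_two,
    Matrix.trace_fin_two_of, Matrix.trace_fin_two, smul_eq_mul]
  ring

theorem norm_ofReal_add_ofReal_mul_I_le {x y r : ℝ} (hr : 0 ≤ r) (h : x ^ 2 + y ^ 2 ≤ r ^ 2) :
    ‖(x : ℂ) + (y : ℂ) * I‖ ≤ r := by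
  rw [norm_add_mul_I]
  exact Real.sqrt_le_iff.mpr ⟨hr, h⟩

theorem norm_dilatation_mu_numerator_le {τ : ℝ} {A : Matrix (Fin 2) (Fin 2) ℝ}
    (h : IsElliptic τ A) :
    ‖((A 1 1 - A 0 0 : ℝ) : ℂ) - ((A 0 1 + A 1 0 : ℝ) : ℂ) * I‖ ≤ A.trace - 2 * τ := by
  have hneg : ((A 1 1 - A 0 0 : ℝ) : ℂ) - ((A 0 1 + A 1 0 : ℝ) : ℂ) * I =
      ((A 1 1 - A 0 0 : ℝ) : ℂ) + ((-(A 0 1 + A 1 0) : ℝ) : ℂ) * I := by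
    push_cast; ring
  rw [hneg, Matrix.trace_fin_two]
  apply norm_ofReal_add_ofReal_mul_I_le
  · linarith [h.le_apply_zero_zero, h.le_apply_one_one]
  · nlinarith [h.sq_add_le]

theorem norm_dilatation_nu_numerator_le {τ : ℝ} {A : Matrix (Fin 2) (Fin 2) ℝ}
    (h : IsElliptic τ A) (hτ : 0 ≤ τ) :
    ‖((1 - A.det : ℝ) : ℂ) + ((A 0 1 - A 1 0 : ℝ) : ℂ) * I‖ ≤ 1 + A.det := by
  have hdet := h.le_det
  have htrace : 2 * τ ≤ A.trace := by
    rw [Matrix.trace_fin_two]; linarith [h.le_apply_zero_zero, h.le_apply_one_one]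
  apply norm_ofReal_add_ofReal_mul_I_le
  · nlinarith [h.sq_le_det hτ]
  · nlinarith

theorem one_add_trace_add_det_le {K : ℝ} (hK : 0 < K) {A : Matrix (Fin 2) (Fin 2) ℝ}
    (hdet : 0 < A.det) (hinv : IsElliptic K⁻¹ A⁻¹) :
    1 + A.trace + A.det ≤ (K + 1) ^ 2 := by
  have h₁ := hinv.le_det
  have h₂ := hinv.sq_le_det (inv_nonneg.mpr hK.le)
  rw [Matrix.trace_inv_fin_two, Matrix.det_nonsing_inv, Ring.inverse_eq_inv] at h₁
  rw [Matrix.det_nonsing_inv, Ring.inverse_eq_inv] at h₂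
  have hdetK : A.det ≤ K ^ 2 := by
    rwa [inv_pow, inv_le_inv₀ (by positivity) hdet] at h₂
  have htraceK : A.trace ≤ 2 * K := by
    have h : K⁻¹ * (A.trace / A.det) ≤ K⁻¹ * (2 * K / A.det) := by
      have h2K : K⁻¹ * (2 * K / A.det) = 2 * A.det⁻¹ := by field_simp
      nlinarith [sq_nonneg (A⁻¹ 0 1 - A⁻¹ 1 0)]
    exact (div_le_div_iff_of_pos_right hdet).mp (le_of_mul_le_mul_left h (inv_pos.mpr hK))
  linarith [add_sq K 1]

/-- Given `K ≥ 1`, there exists a constant `k < 1`, depending only on `K`, such that for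
every `2×2` real matrix `σ` (possibly non-symmetric) satisfying the ellipticity conditions
`σξ·ξ ≥ K⁻¹|ξ|²` and `σ⁻¹ξ·ξ ≥ K⁻¹|ξ|²` for all `ξ ∈ ℝ²`, the complex dilatations
`μ = (σ₂₂ − σ₁₁ − i(σ₁₂+σ₂₁))/(1 + Tr σ + det σ)` and
`ν = (1 − det σ + i(σ₁₂ − σ₂₁))/(1 + Tr σ + det σ)` satisfy `|μ| + |ν| ≤ k`. -/
theorem complex_dilatations_bound (K : ℝ) (hK : 1 ≤ K) :
    ∃ k : ℝ, k < 1 ∧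
      ∀ σ : Matrix (Fin 2) (Fin 2) ℝ,
        (∀ ξ : Fin 2 → ℝ, K⁻¹ * (ξ 0 ^ 2 + ξ 1 ^ 2) ≤ ∑ i, σ.mulVec ξ i * ξ i) →
        (∀ ξ : Fin 2 → ℝ, K⁻¹ * (ξ 0 ^ 2 + ξ 1 ^ 2) ≤ ∑ i, σ⁻¹.mulVec ξ i * ξ i) →
        ‖((((σ 1 1 - σ 0 0 : ℝ) : ℂ) - ((σ 0 1 + σ 1 0 : ℝ) : ℂ) * Complex.I) /
            ((1 + σ.trace + σ.det : ℝ) : ℂ))‖ +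
        ‖((((1 - σ.det : ℝ) : ℂ) + ((σ 0 1 - σ 1 0 : ℝ) : ℂ) * Complex.I) /
            ((1 + σ.trace + σ.det : ℝ) : ℂ))‖ ≤ k := by
  have hK₀ : 0 < K := by linarith
  have hτ : 0 < K⁻¹ := inv_pos.mpr hK₀
  refine ⟨1 - 2 * K⁻¹ / (K + 1) ^ 2, sub_lt_self 1 (by positivity), ?_⟩
  intro σ (hσ : IsElliptic K⁻¹ σ) (hσinv : IsElliptic K⁻¹ σ⁻¹)
  have hdet : 0 < σ.det := (pow_pos hτ 2).trans_le (hσ.sq_le_det hτ.le)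
  have hden : 0 < 1 + σ.trace + σ.det := by
    rw [Matrix.trace_fin_two]; linarith [hσ.le_apply_zero_zero, hσ.le_apply_one_one]
  have hmu := norm_dilatation_mu_numerator_le hσ
  have hnu := norm_dilatation_nu_numerator_le hσ hτ.le
  have hgain : 2 * K⁻¹ / (K + 1) ^ 2 * (1 + σ.trace + σ.det) ≤ 2 * K⁻¹ := by
    rw [div_mul_eq_mul_div, div_le_iff₀ (by positivity)]
    gcongr
    exact one_add_trace_add_det_le hK₀ hdet hσinv
  rw [norm_div, norm_div, Complex.norm_of_nonneg hden.le, ← add_div, div_le_iff₀ hden]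
  linarith
end

section
/- Let G ⊂ ℝ² be a Jordan domain with boundary Γ, let r > 0, w₀ ∈ ℝ², and let U : cl G → cl B_r(w₀) be a homeomorphism mapping Γ onto the circle ∂B_r(w₀). Then for every unit vector ξ ∈ ℝ², the function g = (U·ξ)|_Γ is unimodal on Γ: Γ splits into two simple arcs on which g is respectively nondecreasing and nonincreasing. -/
/-!
On the compact set `Γ` the continuous injection `U` is a homeomorphism onto the circle
`∂B_r(w₀)`. Choose a linear isometry `L : ℂ ≃ ℝ²` with `L 1 = ξ`; pulling back through `U` the
parametrization `t ↦ w₀ - r L(e^{2πit})` of the circle gives a parametrization `φ` of `Γ` along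
which `U·ξ = w₀·ξ - r cos 2πt`, which increases on `[0, 1/2]` and decreases on `[1/2, 1]`.
-/

open Set
open scoped Topology

noncomputable section

/-- The plane `ℝ²`. -/
abbrev E2 : Type := EuclideanSpace ℝ (Fin 2)

/-- A Jordan curve in the plane: the image of a continuous map `φ : ℝ → ℝ²` of period `1`
which is injective on a period. -/
def IsJordanCurve (Γ : Set E2) : Prop :=
  ∃ φ : ℝ → E2, Continuous φ ∧ Function.Periodic φ 1 ∧
    Set.InjOn φ (Set.Ico 0 1) ∧ φ '' Set.Icc 0 1 = Γ

/-- A Jordan domain: a bounded, connected, open planar set whose boundary is a Jordan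
curve. -/
def IsJordanDomain (G : Set E2) : Prop :=
  IsOpen G ∧ IsConnected G ∧ Bornology.IsBounded G ∧ IsJordanCurve (frontier G)

/-- A non-constant continuous function `g` on a Jordan curve `Γ` is unimodal if `Γ` splits
into two simple arcs (with the orientation inherited from `Γ`, here given by a periodic
parametrization) on which `g` is respectively nondecreasing and nonincreasing. -/
def UnimodalOn (g : E2 → ℝ) (Γ : Set E2) : Prop :=
  ContinuousOn g Γ ∧ (¬ ∃ c : ℝ, ∀ x ∈ Γ, g x = c) ∧
  ∃ φ : ℝ → E2, ∃ c ∈ Set.Icc (0 : ℝ) 1,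
    Continuous φ ∧ Function.Periodic φ 1 ∧ Set.InjOn φ (Set.Ico 0 1) ∧
    φ '' Set.Icc 0 1 = Γ ∧
    MonotoneOn (g ∘ φ) (Set.Icc 0 c) ∧ AntitoneOn (g ∘ φ) (Set.Icc c 1)

open Real
open scoped InnerProductSpace

def IsJordanParam {X : Type*} [TopologicalSpace X] (φ : ℝ → X) (Γ : Set X) : Prop :=
  Continuous φ ∧ Function.Periodic φ 1 ∧ InjOn φ (Ico 0 1) ∧ φ '' Icc 0 1 = Γ

namespace IsJordanParam

variable {X Y : Type*} [TopologicalSpace X] [TopologicalSpace Y] {φ : ℝ → X} {Γ : Set X}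

theorem range_eq (hφ : IsJordanParam φ Γ) : range φ = Γ := by
  rw [← hφ.2.1.image_Icc one_pos 0, zero_add, hφ.2.2.2]

theorem mem (hφ : IsJordanParam φ Γ) (t : ℝ) : φ t ∈ Γ :=
  hφ.range_eq ▸ mem_range_self t

theorem comp {f : X → Y} (hφ : IsJordanParam φ Γ) (hf : ContinuousOn f Γ) (hfi : InjOn f Γ) :
    IsJordanParam (f ∘ φ) (f '' Γ) :=
  ⟨hf.comp_continuous hφ.1 hφ.mem, hφ.2.1.comp f,
    hfi.comp hφ.2.2.1 fun t _ => hφ.mem t, by rw [image_comp, hφ.2.2.2]⟩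

theorem of_comp {U : X → Y} (hφc : Continuous φ) (hφΓ : ∀ t, φ t ∈ Γ) (hU : InjOn U Γ)
    (hUφ : IsJordanParam (U ∘ φ) (U '' Γ)) : IsJordanParam φ Γ := by
  refine ⟨hφc, fun t => hU (hφΓ _) (hφΓ _) (hUφ.2.1 t), fun s hs t ht hst => ?_, ?_⟩
  · exact hUφ.2.2.1 hs ht (congrArg U hst)
  · refine (image_subset_iff.2 fun t _ => hφΓ t).antisymm fun x hx => ?_
    obtain ⟨t, ht, hUt⟩ := hUφ.2.2.2.symm ▸ mem_image_of_mem U hx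
    exact ⟨t, ht, hU (hφΓ t) hx hUt⟩

theorem exists_lift [T2Space Y] {U : X → Y} {ψ : ℝ → Y} (hψ : IsJordanParam ψ (U '' Γ))
    (hΓ : IsCompact Γ) (hU : ContinuousOn U Γ) (hUi : InjOn U Γ) :
    ∃ φ : ℝ → X, IsJordanParam φ Γ ∧ U ∘ φ = ψ := by
  have : CompactSpace Γ := isCompact_iff_compactSpace.mp hΓ
  set e := Equiv.Set.imageOfInjOn U Γ hUi
  have he : Continuous e := hU.domRestrict.subtype_mk _
  set φ : ℝ → X := fun t => e.symm ⟨ψ t, hψ.mem t⟩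
  have hUφ : U ∘ φ = ψ := funext fun t => congrArg Subtype.val (e.apply_symm_apply _)
  have hφc : Continuous φ := continuous_subtype_val.comp
    (he.continuous_symm_of_equiv_compact_to_t2.comp (hψ.1.subtype_mk _))
  exact ⟨φ, of_comp hφc (fun t => (e.symm _).2) hUi (hUφ ▸ hψ), hUφ⟩

end IsJordanParam

theorem isJordanParam_circleExp_two_pi_mul :
    IsJordanParam (fun t : ℝ => (Circle.exp (2 * π * t) : ℂ)) (Metric.sphere 0 1) := by
  have hper : Function.Periodic (fun t : ℝ => (Circle.exp (2 * π * t) : ℂ)) 1 := by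
    have := (Circle.periodic_exp.const_mul (2 * π)).comp ((↑) : Circle → ℂ)
    rwa [inv_mul_cancel₀ two_pi_pos.ne'] at this
  refine ⟨by fun_prop, hper, fun s hs t ht hst => ?_, ?_⟩
  · have := Circle.exp_injOn_Ico (a := 0) (b := 2 * π) (by simp)
      ⟨by nlinarith [hs.1, pi_pos], by nlinarith [hs.2, pi_pos]⟩
      ⟨by nlinarith [ht.1, pi_pos], by nlinarith [ht.2, pi_pos]⟩ (Subtype.ext hst)
    nlinarith [pi_pos]
  · have := hper.image_Icc one_pos 0
    rw [zero_add] at this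
    rw [this, ← Complex.range_exp_mul_I]
    exact (mul_left_surjective₀ two_pi_pos.ne').range_comp fun x : ℝ => Complex.exp (x * Complex.I)

section Sphere

variable {E : Type*} [NormedAddCommGroup E] [InnerProductSpace ℝ E]

theorem exists_linearIsometryEquiv_complex_apply_one (hE : Module.finrank ℝ E = 2) {ξ : E}
    (hξ : ‖ξ‖ = 1) : ∃ L : ℂ ≃ₗᵢ[ℝ] E, L 1 = ξ := by
  have : FiniteDimensional ℝ E := .of_finrank_eq_succ hE
  set e := Complex.isometryOfOrthonormal ((stdOrthonormalBasis ℝ E).reindex (finCongr hE))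
  refine ⟨e.trans (Submodule.reflection (ℝ ∙ (e 1 - ξ))ᗮ), Submodule.reflection_sub ?_⟩
  rw [e.norm_map, norm_one, hξ]

def sphereLoop (L : ℂ ≃ₗᵢ[ℝ] E) (w₀ : E) (r : ℝ) (t : ℝ) : E :=
  w₀ - r • L (Circle.exp (2 * π * t))

theorem image_sub_smul_sphere (L : ℂ ≃ₗᵢ[ℝ] E) (w₀ : E) {r : ℝ} (hr : 0 < r) :
    (fun z => w₀ - r • L z) '' Metric.sphere 0 1 = Metric.sphere w₀ r := by
  ext y
  constructor
  · rintro ⟨z, hz, rfl⟩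
    simp_all [norm_smul, abs_of_pos hr]
  · intro hy
    refine ⟨L.symm (r⁻¹ • (w₀ - y)), ?_, show w₀ - r • L _ = y from ?_⟩
    · rw [mem_sphere_iff_norm] at hy
      rw [mem_sphere_zero_iff_norm, L.symm.norm_map, norm_smul, norm_inv, norm_sub_rev, hy,
        Real.norm_of_nonneg hr.le, inv_mul_cancel₀ hr.ne']
    · rw [L.apply_symm_apply, smul_smul, mul_inv_cancel₀ hr.ne', one_smul, sub_sub_cancel]

theorem isJordanParam_sphereLoop (L : ℂ ≃ₗᵢ[ℝ] E) (w₀ : E) {r : ℝ} (hr : 0 < r) :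
    IsJordanParam (sphereLoop L w₀ r) (Metric.sphere w₀ r) := by
  have hinj : Function.Injective fun z => w₀ - r • L z := fun z z' h =>
    L.injective (smul_right_injective E hr.ne' (sub_right_injective h))
  rw [← image_sub_smul_sphere L w₀ hr]
  exact isJordanParam_circleExp_two_pi_mul.comp (by fun_prop) hinj.injOn

theorem inner_sphereLoop_apply_one (L : ℂ ≃ₗᵢ[ℝ] E) (w₀ : E) (r t : ℝ) :
    ⟪sphereLoop L w₀ r t, L 1⟫_ℝ = ⟪w₀, L 1⟫_ℝ - r * cos (2 * π * t) := by
  rw [sphereLoop, inner_sub_left, real_inner_smul_left, L.inner_map_map, Complex.inner, one_mul,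
    Complex.conj_re, Circle.coe_exp, Complex.exp_ofReal_mul_I_re]

end Sphere

theorem antitoneOn_cos_two_pi_mul : AntitoneOn (fun t => cos (2 * π * t)) (Icc 0 (1 / 2)) :=
  fun s hs t ht hst => antitoneOn_cos ⟨by nlinarith [pi_pos, hs.1], by nlinarith [pi_pos, hs.2]⟩
    ⟨by nlinarith [pi_pos, ht.1], by nlinarith [pi_pos, ht.2]⟩ (by gcongr)

theorem monotoneOn_cos_two_pi_mul : MonotoneOn (fun t => cos (2 * π * t)) (Icc (1 / 2) 1) := by
  intro s hs t ht hst
  simpa only [mul_sub, mul_one, cos_two_pi_sub] using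
    antitoneOn_cos_two_pi_mul ⟨by linarith [ht.2], by linarith [ht.1]⟩
      ⟨by linarith [hs.2], by linarith [hs.1]⟩ (by linarith : 1 - t ≤ 1 - s)

theorem unimodalOn_of_isJordanParam {g : E2 → ℝ} {Γ : Set E2} {φ : ℝ → E2}
    (hφ : IsJordanParam φ Γ) (hg : ContinuousOn g Γ) {a r : ℝ} (hr : 0 < r)
    (hgφ : ∀ t, g (φ t) = a - r * cos (2 * π * t)) : UnimodalOn g Γ := by
  refine ⟨hg, ?_, φ, 1 / 2, ⟨by norm_num, by norm_num⟩, hφ.1, hφ.2.1, hφ.2.2.1, hφ.2.2.2,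
    fun s hs t ht hst => ?_, fun s hs t ht hst => ?_⟩
  · rintro ⟨c, hc⟩
    have h0 := hc _ (hφ.mem 0)
    have h1 := hc _ (hφ.mem (1 / 2))
    rw [hgφ, mul_zero, cos_zero] at h0
    rw [hgφ, show 2 * π * (1 / 2) = π by ring, cos_pi] at h1
    linarith
  · simp only [Function.comp_apply, hgφ]
    gcongr
    exact antitoneOn_cos_two_pi_mul hs ht hst
  · simp only [Function.comp_apply, hgφ]
    gcongr
    exact monotoneOn_cos_two_pi_mul hs ht hst

theorem boundary_component_unimodal_general
    (G : Set E2) (hG : IsJordanDomain G) (r : ℝ) (hr : 0 < r) (w₀ : E2)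
    (U : E2 → E2)
    (hUc : ContinuousOn U (closure G)) (hUi : Set.InjOn U (closure G))
    (hUbd : U '' frontier G = Metric.sphere w₀ r) :
    ∀ ξ : E2, ‖ξ‖ = 1 →
      UnimodalOn (fun x => ∑ i, U x i * ξ i) (frontier G) := by
  intro ξ hξ
  obtain ⟨L, rfl⟩ := exists_linearIsometryEquiv_complex_apply_one finrank_euclideanSpace_fin hξ
  have hΓ : IsCompact (frontier G) := hG.2.2.1.isCompact_closure.of_isClosed_subset
    isClosed_frontier frontier_subset_closure
  have hU : ContinuousOn U (frontier G) := hUc.mono frontier_subset_closure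
  have hψ : IsJordanParam (sphereLoop L w₀ r) (U '' frontier G) :=
    hUbd ▸ isJordanParam_sphereLoop L w₀ hr
  obtain ⟨φ, hφ, hUφ⟩ := hψ.exists_lift hΓ hU (hUi.mono frontier_subset_closure)
  have hinner : (fun x => ∑ i, U x i * L 1 i) = fun x => ⟪U x, L 1⟫_ℝ := by
    ext x
    simp [PiLp.inner_apply, mul_comm]
  rw [hinner]
  exact unimodalOn_of_isJordanParam hφ (hU.inner continuousOn_const) hr fun t =>
    hUφ ▸ inner_sphereLoop_apply_one L w₀ r t

/-- Let `G` be a Jordan domain with boundary `Γ`, and let `U : cl G → cl B_r(w₀)` be a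
homeomorphism mapping `Γ` onto the circle `∂B_r(w₀)`.  Then for every unit vector
`ξ ∈ ℝ²`, the function `g = (U·ξ)|_Γ` is unimodal on `Γ`. -/
theorem boundary_component_unimodal
    (G : Set E2) (hG : IsJordanDomain G) (r : ℝ) (hr : 0 < r) (w₀ : E2)
    (U : E2 → E2)
    (hUc : ContinuousOn U (closure G)) (hUi : Set.InjOn U (closure G))
    (hUim : U '' closure G = Metric.closedBall w₀ r)
    (hUbd : U '' frontier G = Metric.sphere w₀ r) :
    ∀ ξ : E2, ‖ξ‖ = 1 →
      UnimodalOn (fun x => ∑ i, U x i * ξ i) (frontier G) :=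
  boundary_component_unimodal_general G hG r hr w₀ U hUc hUi hUbd
end
end
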